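/- Let G₁ and G₂ be finite simple graphs on vertex types V₁ and V₂, and let G be their fully connected disjoint union (join): the graph on V₁ ⊕ V₂ in which inl a is adjacent to inl b iff a and b are adjacent in G₁, inr a is adjacent to inr b iff a and b are adjacent in G₂, and inl a is adjacent to inr b for all a ∈ V₁, b ∈ V₂. If G₁ and G₂ are ħ-perfect, then G is ħ-perfect. -/

import Mathlib

open Matrix

/-- A realization of the graph `G` in dimension `d`: a family of Hermitian involutions that
anticommute on edges and commute on non-edges. -/
def IsRealization {V : Type*} (G : SimpleGraph V) (d : ℕ)
    (S : V → Matrix (Fin d) (Fin d) ℂ) : Prop :=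
  (∀ i, (S i).IsHermitian) ∧ (∀ i, S i * S i = 1) ∧
    (∀ i j, G.Adj i j → S i * S j = -(S j * S i)) ∧
    (∀ i j, i ≠ j → ¬G.Adj i j → S i * S j = S j * S i)

/-- The (real) expectation value `ψᴴ A ψ` of a matrix `A` at a vector `ψ`. -/
noncomputable def expectation {d : ℕ} (A : Matrix (Fin d) (Fin d) ℂ) (ψ : Fin d → ℂ) : ℝ :=
  (star ψ ⬝ᵥ (A *ᵥ ψ)).re

/-- The beta value of a realization: supremum over unit vectors of the weighted sum of squared
expectations. -/
noncomputable def betaVal {V : Type*} [Fintype V] {d : ℕ}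
    (S : V → Matrix (Fin d) (Fin d) ℂ) (w : V → ℝ) : ℝ :=
  sSup {r : ℝ | ∃ ψ : Fin d → ℂ, star ψ ⬝ᵥ ψ = 1 ∧
    r = ∑ i, w i * (expectation (S i) ψ) ^ 2}

/-- A finite set of vertices is independent if no two of its members are adjacent. -/
def IsIndepSet {V : Type*} (G : SimpleGraph V) (I : Finset V) : Prop :=
  ∀ a ∈ I, ∀ b ∈ I, ¬G.Adj a b

/-- The weighted independence number. -/
noncomputable def alphaW {V : Type*} [Fintype V] (G : SimpleGraph V) (w : V → ℝ) : ℝ :=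
  sSup {r : ℝ | ∃ I : Finset V, IsIndepSet G I ∧ r = ∑ i ∈ I, w i}

/-- A graph is ħ-perfect if for every realization and every nonnegative weight vector the beta
value equals the weighted independence number. -/
def HbarPerfect {V : Type*} [Fintype V] (G : SimpleGraph V) : Prop :=
  ∀ d : ℕ, 1 ≤ d → ∀ S : V → Matrix (Fin d) (Fin d) ℂ, IsRealization G d S →
    ∀ w : V → ℝ, (∀ i, 0 ≤ w i) → betaVal S w = alphaW G w

/-!
The independent sets of the join are those of `G₁` and of `G₂`, so `α(G, w) = max α₁ α₂`, and
restricting a realization of `G` to either side shows `β_S(w) ≥ max α₁ α₂`. Conversely, fix a unit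
vector `ψ`, let `Fₖ = ∑_{i ∈ Vₖ} wᵢ ⟨Sᵢ⟩²_ψ` and `Xₖ = ∑_{i ∈ Vₖ} wᵢ ⟨Sᵢ⟩_ψ Sᵢ`. By Cauchy–Schwarz
and ħ-perfectness of `Gₖ`, `⟨Xₖ⟩²_φ ≤ Fₖ αₖ` for every unit vector `φ`, hence `Xₖ² ≤ Fₖ αₖ`.
As `X₁` and `X₂` anticommute, `(X₁ + X₂)² = X₁² + X₂²`, and `⟨X₁ + X₂⟩_ψ = F₁ + F₂` gives
`(F₁ + F₂)² ≤ F₁ α₁ + F₂ α₂ ≤ max α₁ α₂ · (F₁ + F₂)`.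
-/

open scoped ComplexOrder

section Expectation

variable {d : ℕ}

lemma expectation_add (A B : Matrix (Fin d) (Fin d) ℂ) (ψ : Fin d → ℂ) :
    expectation (A + B) ψ = expectation A ψ + expectation B ψ := by
  simp only [expectation, add_mulVec, dotProduct_add, Complex.add_re]

lemma expectation_sub (A B : Matrix (Fin d) (Fin d) ℂ) (ψ : Fin d → ℂ) :
    expectation (A - B) ψ = expectation A ψ - expectation B ψ := by
  simp only [expectation, sub_mulVec, dotProduct_sub, Complex.sub_re]

lemma expectation_ofReal_smul (c : ℝ) (A : Matrix (Fin d) (Fin d) ℂ) (ψ : Fin d → ℂ) :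
    expectation ((c : ℂ) • A) ψ = c * expectation A ψ := by
  simp only [expectation, smul_mulVec, dotProduct_smul, smul_eq_mul, Complex.re_ofReal_mul]

lemma expectation_sum {ι : Type*} (s : Finset ι) (A : ι → Matrix (Fin d) (Fin d) ℂ)
    (ψ : Fin d → ℂ) :
    expectation (∑ i ∈ s, A i) ψ = ∑ i ∈ s, expectation (A i) ψ := by
  simp only [expectation, sum_mulVec, dotProduct_sum, Complex.re_sum]

lemma expectation_one {ψ : Fin d → ℂ} (hψ : star ψ ⬝ᵥ ψ = 1) : expectation 1 ψ = 1 := by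
  simp [expectation, hψ]

lemma Matrix.PosSemidef.expectation_nonneg {A : Matrix (Fin d) (Fin d) ℂ} (hA : A.PosSemidef)
    (ψ : Fin d → ℂ) : 0 ≤ expectation A ψ :=
  hA.re_dotProduct_nonneg ψ

lemma Matrix.IsHermitian.expectation_sq_le {A : Matrix (Fin d) (Fin d) ℂ} (hA : A.IsHermitian)
    {ψ : Fin d → ℂ} (hψ : star ψ ⬝ᵥ ψ = 1) :
    expectation A ψ ^ 2 ≤ expectation (A * A) ψ := by
  set m := expectation A ψ
  set B := A - (m : ℂ) • 1
  have hB : 0 ≤ expectation (B * B) ψ := by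
    have : B * B = Bᴴ * B := by simp [B, hA.eq]
    exact this ▸ (posSemidef_conjTranspose_mul_self B).expectation_nonneg ψ
  have hBB : B * B = A * A + ((-2 * m : ℝ) : ℂ) • A + ((m ^ 2 : ℝ) : ℂ) • 1 := by
    simp only [B, sub_mul, mul_sub, smul_mul_assoc, mul_smul_comm, one_mul, mul_one]
    push_cast
    module
  rw [hBB, expectation_add, expectation_add, expectation_ofReal_smul, expectation_ofReal_smul,
    expectation_one hψ] at hB
  nlinarith

lemma star_dotProduct_self_eq_norm_sq (x : EuclideanSpace ℂ (Fin d)) :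
    star (x : Fin d → ℂ) ⬝ᵥ x = (‖x‖ ^ 2 : ℝ) := by
  rw [dotProduct_comm, ← EuclideanSpace.inner_eq_star_dotProduct, inner_self_eq_norm_sq_to_K]
  push_cast; rfl

open scoped MatrixOrder in
/-- Eigenvalues are expectations at unit eigenvectors, so `c - A²` is positive semidefinite by the
continuous functional calculus. -/
lemma Matrix.IsHermitian.expectation_mul_self_le {A : Matrix (Fin d) (Fin d) ℂ}
    (hA : A.IsHermitian) {c : ℝ}
    (hc : ∀ φ : Fin d → ℂ, star φ ⬝ᵥ φ = 1 → expectation A φ ^ 2 ≤ c)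
    {ψ : Fin d → ℂ} (hψ : star ψ ⬝ᵥ ψ = 1) :
    expectation (A * A) ψ ≤ c := by
  have hspec : ∀ x ∈ spectrum ℝ A, x ^ 2 ≤ c := by
    rw [hA.spectrum_real_eq_range_eigenvalues]
    rintro _ ⟨k, rfl⟩
    have hunit : star ⇑(hA.eigenvectorBasis k) ⬝ᵥ ⇑(hA.eigenvectorBasis k) = 1 := by
      rw [star_dotProduct_self_eq_norm_sq, hA.eigenvectorBasis.orthonormal.1 k]; simp
    rw [hA.eigenvalues_eq k]
    exact hc _ hunit
  have hpsd : 0 ≤ (c : ℂ) • (1 : Matrix (Fin d) (Fin d) ℂ) - A * A := by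
    have : (c : ℂ) • (1 : Matrix (Fin d) (Fin d) ℂ) - A * A =
        cfc (fun x : ℝ => c - x ^ 2) A := by
      rw [cfc_sub (fun _ => c) (· ^ 2) A, cfc_const c A, cfc_pow_id A 2, sq,
        Algebra.algebraMap_eq_smul_one, ← Complex.coe_smul]
    rw [this]
    exact cfc_nonneg fun x hx => sub_nonneg.2 (hspec x hx)
  have := (nonneg_iff_posSemidef.1 hpsd).expectation_nonneg ψ
  rwa [expectation_sub, expectation_ofReal_smul, expectation_one hψ, mul_one, sub_nonneg] at this

end Expectation

section Realization

variable {V : Type*} {G : SimpleGraph V} {d : ℕ} {S : V → Matrix (Fin d) (Fin d) ℂ}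

lemma IsRealization.comp {W : Type*} {H : SimpleGraph W} (hS : IsRealization G d S) {f : W → V}
    (hf : Function.Injective f) (hadj : ∀ a b, G.Adj (f a) (f b) ↔ H.Adj a b) :
    IsRealization H d (S ∘ f) :=
  ⟨fun _ => hS.1 _, fun _ => hS.2.1 _,
    fun i j hij => hS.2.2.1 _ _ ((hadj i j).2 hij),
    fun i j hne hij => hS.2.2.2 _ _ (hf.ne hne) (mt (hadj i j).1 hij)⟩

lemma IsRealization.expectation_sq_le_one (hS : IsRealization G d S) (i : V) {ψ : Fin d → ℂ}
    (hψ : star ψ ⬝ᵥ ψ = 1) : expectation (S i) ψ ^ 2 ≤ 1 := by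
  simpa [hS.2.1 i, expectation_one hψ] using (hS.1 i).expectation_sq_le hψ

variable [Fintype V]

lemma IsRealization.sum_le_betaVal (hS : IsRealization G d S) {w : V → ℝ} (hw : ∀ i, 0 ≤ w i)
    {ψ : Fin d → ℂ} (hψ : star ψ ⬝ᵥ ψ = 1) :
    ∑ i, w i * expectation (S i) ψ ^ 2 ≤ betaVal S w := by
  refine le_csSup ⟨∑ i, w i, ?_⟩ ⟨ψ, hψ, rfl⟩
  rintro _ ⟨φ, hφ, rfl⟩
  exact Finset.sum_le_sum fun i _ =>
    mul_le_of_le_one_right (hw i) (hS.expectation_sq_le_one i hφ)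

lemma exists_star_dotProduct_self_eq_one (hd : 1 ≤ d) : ∃ ψ : Fin d → ℂ, star ψ ⬝ᵥ ψ = 1 :=
  ⟨Pi.single ⟨0, hd⟩ 1, by simp⟩

lemma betaVal_le (hd : 1 ≤ d) {w : V → ℝ} {b : ℝ}
    (h : ∀ ψ : Fin d → ℂ, star ψ ⬝ᵥ ψ = 1 → ∑ i, w i * expectation (S i) ψ ^ 2 ≤ b) :
    betaVal S w ≤ b := by
  obtain ⟨ψ, hψ⟩ := exists_star_dotProduct_self_eq_one hd
  exact csSup_le ⟨_, ψ, hψ, rfl⟩ fun _ ⟨φ, hφ, hr⟩ => hr ▸ h φ hφ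

lemma IsIndepSet.sum_le_alphaW {I : Finset V} (hI : IsIndepSet G I) (w : V → ℝ) :
    ∑ i ∈ I, w i ≤ alphaW G w := by
  refine le_csSup ((Set.finite_range fun J : Finset V => ∑ i ∈ J, w i).subset ?_).bddAbove
    ⟨I, hI, rfl⟩
  rintro _ ⟨J, -, rfl⟩
  exact ⟨J, rfl⟩

lemma alphaW_le {w : V → ℝ} {b : ℝ} (h : ∀ I, IsIndepSet G I → ∑ i ∈ I, w i ≤ b) :
    alphaW G w ≤ b :=
  csSup_le ⟨0, ∅, by simp [IsIndepSet], by simp⟩ fun _ ⟨I, hI, hr⟩ => hr ▸ h I hI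

lemma HbarPerfect.sum_le_alphaW (hG : HbarPerfect G) (hd : 1 ≤ d) (hS : IsRealization G d S)
    {w : V → ℝ} (hw : ∀ i, 0 ≤ w i) {ψ : Fin d → ℂ} (hψ : star ψ ⬝ᵥ ψ = 1) :
    ∑ i, w i * expectation (S i) ψ ^ 2 ≤ alphaW G w :=
  hG d hd S hS w hw ▸ hS.sum_le_betaVal hw hψ

end Realization

lemma Finset.sum_smul_mul_sum_smul_eq_neg {𝕜 R ι κ : Type*} [CommSemiring 𝕜] [Ring R]
    [Algebra 𝕜 R] (s : Finset ι) (t : Finset κ) (a : ι → 𝕜) (b : κ → 𝕜) (A : ι → R) (B : κ → R)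
    (h : ∀ i j, A i * B j = -(B j * A i)) :
    (∑ i ∈ s, a i • A i) * (∑ j ∈ t, b j • B j) =
      -((∑ j ∈ t, b j • B j) * ∑ i ∈ s, a i • A i) := by
  simp only [Finset.sum_mul, Finset.mul_sum, smul_mul_smul_comm, h, smul_neg,
    ← Finset.sum_neg_distrib]
  rw [Finset.sum_comm]
  simp only [mul_comm (a _)]

section WeightedObservable

variable {ι : Type*} [Fintype ι] {d : ℕ}

noncomputable def weightedObservable (A : ι → Matrix (Fin d) (Fin d) ℂ) (w : ι → ℝ)
    (ψ : Fin d → ℂ) : Matrix (Fin d) (Fin d) ℂ :=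
  ∑ i, ((w i * expectation (A i) ψ : ℝ) : ℂ) • A i

variable {A : ι → Matrix (Fin d) (Fin d) ℂ} {w : ι → ℝ} {ψ : Fin d → ℂ}

lemma isHermitian_weightedObservable (hA : ∀ i, (A i).IsHermitian) :
    (weightedObservable A w ψ).IsHermitian :=
  isSelfAdjoint_sum _ fun i _ => (hA i).smul (Complex.conj_ofReal _)

lemma expectation_weightedObservable (φ : Fin d → ℂ) :
    expectation (weightedObservable A w ψ) φ =
      ∑ i, w i * expectation (A i) ψ * expectation (A i) φ := by
  simp only [weightedObservable, expectation_sum, expectation_ofReal_smul]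

lemma expectation_weightedObservable_self :
    expectation (weightedObservable A w ψ) ψ = ∑ i, w i * expectation (A i) ψ ^ 2 := by
  simp only [expectation_weightedObservable, mul_assoc, sq]

lemma expectation_weightedObservable_mul_self_le (hA : ∀ i, (A i).IsHermitian)
    (hw : ∀ i, 0 ≤ w i) {b : ℝ}
    (hb : ∀ φ : Fin d → ℂ, star φ ⬝ᵥ φ = 1 → ∑ i, w i * expectation (A i) φ ^ 2 ≤ b)
    (hψ : star ψ ⬝ᵥ ψ = 1) :
    expectation (weightedObservable A w ψ * weightedObservable A w ψ) ψ ≤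
      (∑ i, w i * expectation (A i) ψ ^ 2) * b := by
  refine (isHermitian_weightedObservable hA).expectation_mul_self_le (fun φ hφ => ?_) hψ
  have hnonneg : ∀ φ : Fin d → ℂ, ∀ i ∈ Finset.univ, 0 ≤ w i * expectation (A i) φ ^ 2 :=
    fun φ i _ => mul_nonneg (hw i) (sq_nonneg _)
  calc expectation (weightedObservable A w ψ) φ ^ 2
      ≤ (∑ i, w i * expectation (A i) ψ ^ 2) * ∑ i, w i * expectation (A i) φ ^ 2 := by
        rw [expectation_weightedObservable]
        exact Finset.sum_sq_le_sum_mul_sum_of_sq_le_mul _ (hnonneg ψ) (hnonneg φ)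
          fun i _ => le_of_eq (by ring)
    _ ≤ (∑ i, w i * expectation (A i) ψ ^ 2) * b :=
        mul_le_mul_of_nonneg_left (hb φ hφ) (Finset.sum_nonneg (hnonneg ψ))

lemma weightedObservable_sum_type {κ : Type*} [Fintype κ]
    (A : ι ⊕ κ → Matrix (Fin d) (Fin d) ℂ) (w : ι ⊕ κ → ℝ) (ψ : Fin d → ℂ) :
    weightedObservable A w ψ = weightedObservable (A ∘ Sum.inl) (w ∘ Sum.inl) ψ +
      weightedObservable (A ∘ Sum.inr) (w ∘ Sum.inr) ψ :=
  Fintype.sum_sum_type _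

end WeightedObservable

lemma Matrix.IsHermitian.expectation_add_sq_le {d : ℕ} {X Y : Matrix (Fin d) (Fin d) ℂ}
    (hX : X.IsHermitian) (hY : Y.IsHermitian) (hXY : X * Y = -(Y * X)) {ψ : Fin d → ℂ}
    (hψ : star ψ ⬝ᵥ ψ = 1) :
    expectation (X + Y) ψ ^ 2 ≤ expectation (X * X) ψ + expectation (Y * Y) ψ := by
  have hsq : (X + Y) * (X + Y) = X * X + Y * Y := by
    rw [add_mul, mul_add, mul_add, hXY]; abel
  simpa only [hsq, expectation_add] using (hX.add hY).expectation_sq_le hψ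

section Comp

variable {V W : Type*} [Fintype V] [Fintype W] {G : SimpleGraph V} {H : SimpleGraph W}
  {f : W → V}

lemma alphaW_comp_le (hf : Function.Injective f) (hadj : ∀ a b, G.Adj (f a) (f b) ↔ H.Adj a b)
    (w : V → ℝ) : alphaW H (w ∘ f) ≤ alphaW G w := by
  refine alphaW_le fun I hI => ?_
  have hmap : IsIndepSet G (I.map ⟨f, hf⟩) := by
    simp only [IsIndepSet, Finset.mem_map, Function.Embedding.coeFn_mk, forall_exists_index,
      and_imp, forall_apply_eq_imp_iff₂, hadj]
    exact hI
  simpa using hmap.sum_le_alphaW w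

lemma IsRealization.betaVal_comp_le {d : ℕ} {S : V → Matrix (Fin d) (Fin d) ℂ}
    (hS : IsRealization G d S) (hd : 1 ≤ d) (hf : Function.Injective f) {w : V → ℝ}
    (hw : ∀ i, 0 ≤ w i) : betaVal (S ∘ f) (w ∘ f) ≤ betaVal S w := by
  refine betaVal_le hd fun ψ hψ => le_trans ?_ (hS.sum_le_betaVal hw hψ)
  calc ∑ i, (w ∘ f) i * expectation ((S ∘ f) i) ψ ^ 2
      = ∑ v ∈ Finset.univ.map ⟨f, hf⟩, w v * expectation (S v) ψ ^ 2 :=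
        (Finset.sum_map Finset.univ ⟨f, hf⟩ fun v => w v * expectation (S v) ψ ^ 2).symm
    _ ≤ ∑ v, w v * expectation (S v) ψ ^ 2 :=
        Finset.sum_le_sum_of_subset_of_nonneg (Finset.subset_univ _)
          fun v _ _ => mul_nonneg (hw v) (sq_nonneg _)

end Comp

section Join

variable {V₁ V₂ : Type*} [Fintype V₁] [Fintype V₂] {G₁ : SimpleGraph V₁} {G₂ : SimpleGraph V₂}
  {G : SimpleGraph (V₁ ⊕ V₂)}

lemma alphaW_join (hll : ∀ a b, G.Adj (Sum.inl a) (Sum.inl b) ↔ G₁.Adj a b)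
    (hrr : ∀ a b, G.Adj (Sum.inr a) (Sum.inr b) ↔ G₂.Adj a b)
    (hlr : ∀ a b, G.Adj (Sum.inl a) (Sum.inr b)) (w : V₁ ⊕ V₂ → ℝ) :
    alphaW G w = max (alphaW G₁ (w ∘ Sum.inl)) (alphaW G₂ (w ∘ Sum.inr)) := by
  refine le_antisymm (alphaW_le fun I hI => ?_)
    (max_le (alphaW_comp_le Sum.inl_injective hll w) (alphaW_comp_le Sum.inr_injective hrr w))
  have hI₁ : IsIndepSet G₁ I.toLeft := fun a ha b hb hab =>
    hI _ (Finset.mem_toLeft.1 ha) _ (Finset.mem_toLeft.1 hb) ((hll a b).2 hab)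
  have hI₂ : IsIndepSet G₂ I.toRight := fun a ha b hb hab =>
    hI _ (Finset.mem_toRight.1 ha) _ (Finset.mem_toRight.1 hb) ((hrr a b).2 hab)
  have hempty : I.toLeft = ∅ ∨ I.toRight = ∅ := by
    by_contra! h
    obtain ⟨⟨a, ha⟩, ⟨b, hb⟩⟩ := h
    exact hI _ (Finset.mem_toLeft.1 ha) _ (Finset.mem_toRight.1 hb) (hlr a b)
  rw [Finset.sum_sum_eq_sum_toLeft_add_sum_toRight]
  rcases hempty with h | h
  · simpa [h] using le_max_of_le_right (hI₂.sum_le_alphaW (w ∘ Sum.inr))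
  · simpa [h] using le_max_of_le_left (hI₁.sum_le_alphaW (w ∘ Sum.inl))

lemma sum_le_max_alphaW_of_join (hll : ∀ a b, G.Adj (Sum.inl a) (Sum.inl b) ↔ G₁.Adj a b)
    (hrr : ∀ a b, G.Adj (Sum.inr a) (Sum.inr b) ↔ G₂.Adj a b)
    (hlr : ∀ a b, G.Adj (Sum.inl a) (Sum.inr b)) (h₁ : HbarPerfect G₁) (h₂ : HbarPerfect G₂)
    {d : ℕ} (hd : 1 ≤ d) {S : V₁ ⊕ V₂ → Matrix (Fin d) (Fin d) ℂ} (hS : IsRealization G d S)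
    {w : V₁ ⊕ V₂ → ℝ} (hw : ∀ i, 0 ≤ w i) {ψ : Fin d → ℂ} (hψ : star ψ ⬝ᵥ ψ = 1) :
    ∑ i, w i * expectation (S i) ψ ^ 2 ≤
      max (alphaW G₁ (w ∘ Sum.inl)) (alphaW G₂ (w ∘ Sum.inr)) := by
  have hS₁ := hS.comp Sum.inl_injective hll
  have hS₂ := hS.comp Sum.inr_injective hrr
  set α₁ := alphaW G₁ (w ∘ Sum.inl)
  set α₂ := alphaW G₂ (w ∘ Sum.inr)
  set F₁ := ∑ i, (w ∘ Sum.inl) i * expectation ((S ∘ Sum.inl) i) ψ ^ 2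
  set F₂ := ∑ i, (w ∘ Sum.inr) i * expectation ((S ∘ Sum.inr) i) ψ ^ 2
  set X₁ := weightedObservable (S ∘ Sum.inl) (w ∘ Sum.inl) ψ
  set X₂ := weightedObservable (S ∘ Sum.inr) (w ∘ Sum.inr) ψ
  have hF₁ : F₁ ≤ α₁ := h₁.sum_le_alphaW hd hS₁ (fun _ => hw _) hψ
  have hF₂ : F₂ ≤ α₂ := h₂.sum_le_alphaW hd hS₂ (fun _ => hw _) hψ
  have hF₁0 : 0 ≤ F₁ := Finset.sum_nonneg fun _ _ => mul_nonneg (hw _) (sq_nonneg _)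
  have hF₂0 : 0 ≤ F₂ := Finset.sum_nonneg fun _ _ => mul_nonneg (hw _) (sq_nonneg _)
  have hX₁ : expectation (X₁ * X₁) ψ ≤ F₁ * α₁ :=
    expectation_weightedObservable_mul_self_le hS₁.1 (fun _ => hw _)
      (fun _ => h₁.sum_le_alphaW hd hS₁ (fun _ => hw _)) hψ
  have hX₂ : expectation (X₂ * X₂) ψ ≤ F₂ * α₂ :=
    expectation_weightedObservable_mul_self_le hS₂.1 (fun _ => hw _)
      (fun _ => h₂.sum_le_alphaW hd hS₂ (fun _ => hw _)) hψ
  have hanti : X₁ * X₂ = -(X₂ * X₁) :=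
    Finset.sum_smul_mul_sum_smul_eq_neg _ _ _ _ _ _ fun i j => hS.2.2.1 _ _ (hlr i j)
  have hsum : ∑ i, w i * expectation (S i) ψ ^ 2 = F₁ + F₂ := Fintype.sum_sum_type _
  have hsq : (F₁ + F₂) ^ 2 ≤ max α₁ α₂ * (F₁ + F₂) :=
    calc (F₁ + F₂) ^ 2 ≤ expectation (X₁ * X₁) ψ + expectation (X₂ * X₂) ψ := by
          rw [← hsum, ← expectation_weightedObservable_self, weightedObservable_sum_type]
          exact (isHermitian_weightedObservable hS₁.1).expectation_add_sq_le
            (isHermitian_weightedObservable hS₂.1) hanti hψ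
      _ ≤ F₁ * α₁ + F₂ * α₂ := add_le_add hX₁ hX₂
      _ ≤ F₁ * max α₁ α₂ + F₂ * max α₁ α₂ := by
          gcongr
          exacts [le_max_left _ _, le_max_right _ _]
      _ = max α₁ α₂ * (F₁ + F₂) := by ring
  rw [hsum]
  nlinarith [le_max_left α₁ α₂]

end Join

/-- The join (fully connected disjoint union) of two ħ-perfect graphs is ħ-perfect. -/
theorem stmt_2 {V₁ V₂ : Type*} [Fintype V₁] [Fintype V₂]
    (G₁ : SimpleGraph V₁) (G₂ : SimpleGraph V₂) (G : SimpleGraph (V₁ ⊕ V₂))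
    (hll : ∀ a b, G.Adj (Sum.inl a) (Sum.inl b) ↔ G₁.Adj a b)
    (hrr : ∀ a b, G.Adj (Sum.inr a) (Sum.inr b) ↔ G₂.Adj a b)
    (hlr : ∀ a b, G.Adj (Sum.inl a) (Sum.inr b))
    (h₁ : HbarPerfect G₁) (h₂ : HbarPerfect G₂) :
    HbarPerfect G := by
  intro d hd S hS w hw
  rw [alphaW_join hll hrr hlr]
  refine le_antisymm
    (betaVal_le hd fun ψ hψ => sum_le_max_alphaW_of_join hll hrr hlr h₁ h₂ hd hS hw hψ)
    (max_le ?_ ?_)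
  · rw [← h₁ d hd _ (hS.comp Sum.inl_injective hll) (w ∘ Sum.inl) fun _ => hw _]
    exact hS.betaVal_comp_le hd Sum.inl_injective hw
  · rw [← h₂ d hd _ (hS.comp Sum.inr_injective hrr) (w ∘ Sum.inr) fun _ => hw _]
    exact hS.betaVal_comp_le hd Sum.inr_injective hw
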